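/- Let D = (V, A) be a digraph, let s be a nonnegative integer, let τ be a degree list function on V, let Π be a sequence property, and let C ⊆ V be a 2s(Δ_D + 1)-block-type set for (D, τ). If there exists a loopless arc set A' ⊆ (V × V) \ A with |A'| ≤ s such that σ(D + A') fulfills Π and deg_{D+A'}(v) ∈ τ(v) for all v ∈ V, then there exists a loopless arc set A* ⊆ (C × C) \ A with |A*| ≤ s such that σ(D + A*) fulfills Π and deg_{D+A*}(v) ∈ τ(v) for all v ∈ V. -/

import Mathlib

/-! Let `A'` be a solution and `v ∉ C` an endpoint of one of its arcs. Since `C` contains every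
unsatisfied vertex, `v` is satisfied in `D`, and it has degree `d = deg_D v` and the nonzero type
`t = deg_{A'} v`. As `v` itself lies outside `C`, the block-type set `C` contains
`α = 2s(Δ+1)` satisfied vertices of degree `d` and type `t`. At most `2s` vertices are endpoints
of `A'` and at most `2sΔ` are `D`-neighbours through which moving an endpoint of an arc of `A'`
would create a double arc, so some such `w ∈ C` is free. Exchanging `v` and `w` in `A'` permutes
the degrees of `D + A'`, keeps every vertex satisfied and removes `v` from the endpoints outside
`C`; iterating moves all arcs into `C × C`. -/

/-- Indegree of vertex `v` in the digraph with arc set `A`. -/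
def inDeg {V : Type*} [DecidableEq V] (A : Finset (V × V)) (v : V) : ℕ :=
  (A.filter fun a => a.2 = v).card

/-- Outdegree of vertex `v` in the digraph with arc set `A`. -/
def outDeg {V : Type*} [DecidableEq V] (A : Finset (V × V)) (v : V) : ℕ :=
  (A.filter fun a => a.1 = v).card

/-- Degree pair (indegree, outdegree) of vertex `v`. -/
def deg {V : Type*} [DecidableEq V] (A : Finset (V × V)) (v : V) : ℕ × ℕ :=
  (inDeg A v, outDeg A v)

/-- Degree sequence of the digraph with arc set `A`. -/
def degSeq {V : Type*} [Fintype V] [DecidableEq V] (A : Finset (V × V)) :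
    Multiset (ℕ × ℕ) :=
  Finset.univ.val.map (deg A)

/-- Maximum in- or outdegree in the digraph with arc set `A`. -/
def maxDeg {V : Type*} [Fintype V] [DecidableEq V] (A : Finset (V × V)) : ℕ :=
  Finset.univ.sup fun v => max (inDeg A v) (outDeg A v)

/-- The satisfied vertices of degree `d` and type `t` with respect to the
degree list function `τ`:  vertices `v` with `deg v = d`, `deg v + t ∈ τ v`
and `deg v ∈ τ v`, i.e. `(B_D(d) ∩ T_{D,τ}(t)) \ U`. -/
def satDegType {V : Type*} [Fintype V] [DecidableEq V]
    (A : Finset (V × V)) (τ : V → Finset (ℕ × ℕ)) (d t : ℕ × ℕ) : Finset V :=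
  Finset.univ.filter fun v => deg A v = d ∧ deg A v + t ∈ τ v ∧ deg A v ∈ τ v

/-- `C` is an `α`-block-type set for `(D, τ)`:  it contains all unsatisfied
vertices and, for each degree `d` occurring in `σ(D)` and each type `t ≠ (0,0)`,
exactly `min |(B_D(d) ∩ T_{D,τ}(t)) \ U| α` satisfied vertices of degree `d`
and type `t`. -/
def IsBlockTypeSet {V : Type*} [Fintype V] [DecidableEq V]
    (A : Finset (V × V)) (τ : V → Finset (ℕ × ℕ)) (α : ℕ) (C : Finset V) : Prop :=
  (∀ v : V, deg A v ∉ τ v → v ∈ C) ∧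
  ∀ d t : ℕ × ℕ, (∃ v : V, deg A v = d) → t ≠ (0, 0) →
    (satDegType A τ d t ∩ C).card = min (satDegType A τ d t).card α

open Finset

section Relabel

variable {V : Type*}

def relabel (σ : Equiv.Perm V) (A : Finset (V × V)) : Finset (V × V) :=
  A.map (σ.prodCongr σ).toEmbedding

lemma card_relabel (σ : Equiv.Perm V) (A : Finset (V × V)) : #(relabel σ A) = #A :=
  card_map _

lemma relabel_loopless (σ : Equiv.Perm V) {A : Finset (V × V)} (h : ∀ x, (x, x) ∉ A)
    (x : V) : (x, x) ∉ relabel σ A := by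
  simpa [relabel] using h (σ.symm x)

end Relabel

section Arcs

variable {V : Type*} [DecidableEq V]

lemma inDeg_union {A A' : Finset (V × V)} (h : Disjoint A A') (x : V) :
    inDeg (A ∪ A') x = inDeg A x + inDeg A' x := by
  rw [inDeg, filter_union, card_union_of_disjoint (disjoint_filter_filter h)]; rfl

lemma outDeg_union {A A' : Finset (V × V)} (h : Disjoint A A') (x : V) :
    outDeg (A ∪ A') x = outDeg A x + outDeg A' x := by
  rw [outDeg, filter_union, card_union_of_disjoint (disjoint_filter_filter h)]; rfl

lemma deg_union {A A' : Finset (V × V)} (h : Disjoint A A') (x : V) :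
    deg (A ∪ A') x = deg A x + deg A' x :=
  Prod.ext (inDeg_union h x) (outDeg_union h x)

def endpoints (A : Finset (V × V)) : Finset V :=
  A.image Prod.fst ∪ A.image Prod.snd

lemma card_endpoints_le (A : Finset (V × V)) : #(endpoints A) ≤ 2 * #A := by
  have := card_union_le (A.image Prod.fst) (A.image Prod.snd)
  have := card_image_le (s := A) (f := Prod.fst)
  have := card_image_le (s := A) (f := Prod.snd)
  rw [endpoints]; omega

lemma deg_eq_zero_iff_notMem_endpoints {A : Finset (V × V)} {x : V} :
    deg A x = 0 ↔ x ∉ endpoints A := by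
  simp only [deg, inDeg, outDeg, endpoints, Prod.ext_iff, Prod.fst_zero, Prod.snd_zero,
    card_eq_zero, filter_eq_empty_iff, mem_union, mem_image, not_or, not_exists, not_and]
  exact and_comm

lemma subset_product_of_endpoints_subset {A : Finset (V × V)} {C : Finset V}
    (h : endpoints A ⊆ C) : A ⊆ C ×ˢ C := fun _ ha =>
  mem_product.mpr ⟨h (mem_union_left _ (mem_image_of_mem _ ha)),
    h (mem_union_right _ (mem_image_of_mem _ ha))⟩

lemma inDeg_le_maxDeg [Fintype V] (A : Finset (V × V)) (x : V) : inDeg A x ≤ maxDeg A :=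
  (le_max_left _ _).trans (le_sup (f := fun v => max (inDeg A v) (outDeg A v)) (mem_univ x))

lemma outDeg_le_maxDeg [Fintype V] (A : Finset (V × V)) (x : V) : outDeg A x ≤ maxDeg A :=
  (le_max_right _ _).trans (le_sup (f := fun v => max (inDeg A v) (outDeg A v)) (mem_univ x))

def inNbrs (A : Finset (V × V)) (x : V) : Finset V :=
  (A.filter fun a => a.2 = x).image Prod.fst

def outNbrs (A : Finset (V × V)) (x : V) : Finset V :=
  (A.filter fun a => a.1 = x).image Prod.snd

lemma mem_inNbrs {A : Finset (V × V)} {u x : V} : u ∈ inNbrs A x ↔ (u, x) ∈ A := by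
  simp [inNbrs]

lemma mem_outNbrs {A : Finset (V × V)} {u x : V} : u ∈ outNbrs A x ↔ (x, u) ∈ A := by
  simp [outNbrs]

/-- The vertices that cannot take over the role of an endpoint of an arc of `A'` without
creating a multiarc with `A`, or that are already endpoints of `A'`. -/
def blocked (A A' : Finset (V × V)) : Finset V :=
  endpoints A' ∪ A'.biUnion fun a => inNbrs A a.2 ∪ outNbrs A a.1

lemma card_blocked_le [Fintype V] (A A' : Finset (V × V)) :
    #(blocked A A') ≤ 2 * #A' * (maxDeg A + 1) := by
  have hnbrs : ∀ a ∈ A', #(inNbrs A a.2 ∪ outNbrs A a.1) ≤ 2 * maxDeg A := fun a _ =>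
    calc #(inNbrs A a.2 ∪ outNbrs A a.1)
        ≤ inDeg A a.2 + outDeg A a.1 :=
          (card_union_le _ _).trans (add_le_add card_image_le card_image_le)
      _ ≤ maxDeg A + maxDeg A := add_le_add (inDeg_le_maxDeg A _) (outDeg_le_maxDeg A _)
      _ = 2 * maxDeg A := by ring
  calc #(blocked A A')
      ≤ 2 * #A' + #A' * (2 * maxDeg A) :=
        (card_union_le _ _).trans (add_le_add (card_endpoints_le A')
          (card_biUnion_le_card_mul _ _ _ hnbrs))
    _ = 2 * #A' * (maxDeg A + 1) := by ring

lemma deg_relabel (σ : Equiv.Perm V) (A : Finset (V × V)) (x : V) :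
    deg (relabel σ A) x = deg A (σ.symm x) := by
  simp only [deg, inDeg, outDeg, relabel, filter_map, card_map]
  congr 2 <;> exact filter_congr fun a _ => σ.eq_symm_apply.symm

lemma disjoint_relabel_swap {A A' : Finset (V × V)} (hd : Disjoint A A')
    (hl : ∀ x, (x, x) ∉ A') {v w : V} (hw : w ∉ blocked A A') :
    Disjoint A (relabel (Equiv.swap v w) A') := by
  simp only [blocked, mem_union, mem_biUnion, not_or, not_exists, not_and, mem_inNbrs,
    mem_outNbrs] at hw
  obtain ⟨hwe, hwA⟩ := hw
  rw [disjoint_right]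
  rintro _ hb
  obtain ⟨⟨p, q⟩, ha, rfl⟩ := mem_map.mp hb
  have hp : p ≠ w := fun h => hwe (h ▸ mem_union_left _ (mem_image_of_mem _ ha))
  have hq : q ≠ w := fun h => hwe (h ▸ mem_union_right _ (mem_image_of_mem _ ha))
  simp only [Equiv.coe_toEmbedding, Equiv.prodCongr_apply, Prod.map]
  by_cases hpv : p = v <;> by_cases hqv : q = v
  · exact absurd ha (hpv ▸ hqv ▸ hl v)
  · subst hpv
    simpa [Equiv.swap_apply_of_ne_of_ne hqv hq] using (hwA _ ha).1
  · subst hqv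
    simpa [Equiv.swap_apply_of_ne_of_ne hpv hp] using (hwA _ ha).2
  · simpa [Equiv.swap_apply_of_ne_of_ne hpv hp, Equiv.swap_apply_of_ne_of_ne hqv hq] using
      disjoint_right.mp hd ha

lemma degSeq_eq_of_deg_eq_comp [Fintype V] {A B : Finset (V × V)} (σ : Equiv.Perm V)
    (h : ∀ x, deg B x = deg A (σ x)) : degSeq B = degSeq A := by
  rw [degSeq, degSeq, show deg B = deg A ∘ σ from funext h, ← Multiset.map_map,
    Multiset.map_univ_val_equiv]

end Arcs

section Solutions

variable {V : Type*} [Fintype V] [DecidableEq V]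

def IsSolution (A : Finset (V × V)) (τ : V → Finset (ℕ × ℕ))
    (Prp : Multiset (ℕ × ℕ) → Prop) (s : ℕ) (A' : Finset (V × V)) : Prop :=
  (∀ a ∈ A', a ∉ A) ∧ (∀ v : V, (v, v) ∉ A') ∧ A'.card ≤ s ∧
    Prp (degSeq (A ∪ A')) ∧ (∀ v : V, deg (A ∪ A') v ∈ τ v)

variable {A A' : Finset (V × V)} {τ : V → Finset (ℕ × ℕ)}
  {Prp : Multiset (ℕ × ℕ) → Prop} {s : ℕ}

lemma IsBlockTypeSet.deg_mem_of_notMem {α : ℕ} {C : Finset V} (hC : IsBlockTypeSet A τ α C)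
    {v : V} (hv : v ∉ C) : deg A v ∈ τ v :=
  by_contra fun h => hv (hC.1 v h)

lemma IsSolution.relabel_swap (hA' : IsSolution A τ Prp s A') {v w : V}
    (hv : deg A v ∈ τ v) (hwv : deg A w = deg A v) (hw : deg A w + deg A' v ∈ τ w)
    (hwb : w ∉ blocked A A') : IsSolution A τ Prp s (relabel (Equiv.swap v w) A') := by
  obtain ⟨hd, hl, hs, hP, hτ⟩ := hA'
  have hd : Disjoint A A' := disjoint_right.mpr hd
  have hdB := disjoint_relabel_swap (v := v) hd hl hwb
  have hw0 : deg A' w = 0 :=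
    deg_eq_zero_iff_notMem_endpoints.mpr fun h => hwb (mem_union_left _ h)
  have hdegB : ∀ x, deg (A ∪ relabel (Equiv.swap v w) A') x =
      deg A x + deg A' (Equiv.swap v w x) := fun x => by
    rw [deg_union hdB, deg_relabel, Equiv.symm_swap]
  have hdegA : ∀ x, deg A (Equiv.swap v w x) = deg A x := fun x => by
    rcases eq_or_ne x v with rfl | hxv
    · rw [Equiv.swap_apply_left, hwv]
    rcases eq_or_ne x w with rfl | hxw
    · rw [Equiv.swap_apply_right, hwv]
    · rw [Equiv.swap_apply_of_ne_of_ne hxv hxw]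
  refine ⟨disjoint_right.mp hdB, relabel_loopless _ hl, (card_relabel _ A').trans_le hs,
    ?_, fun x => ?_⟩
  · rwa [degSeq_eq_of_deg_eq_comp (Equiv.swap v w) fun x => by
      rw [hdegB, deg_union hd, hdegA]]
  · rw [hdegB]
    by_cases hxv : x = v
    · simpa [hxv, hw0] using hv
    by_cases hxw : x = w
    · simpa [hxw] using hw
    simpa [Equiv.swap_apply_of_ne_of_ne hxv hxw, deg_union hd] using hτ x

lemma exists_swap_partner {C : Finset V} (hC : IsBlockTypeSet A τ (2 * s * (maxDeg A + 1)) C)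
    (hd : Disjoint A A') (hs : #A' ≤ s) (hτ : ∀ x, deg (A ∪ A') x ∈ τ x)
    {v : V} (hv : v ∈ endpoints A') (hvC : v ∉ C) :
    ∃ w ∈ C, deg A w = deg A v ∧ deg A w + deg A' v ∈ τ w ∧ w ∉ blocked A A' := by
  set S := satDegType A τ (deg A v) (deg A' v)
  have hvS : v ∈ S :=
    mem_filter.mpr ⟨mem_univ v, rfl, deg_union hd v ▸ hτ v, hC.deg_mem_of_notMem hvC⟩
  have hSC : #(S ∩ C) < #S :=
    card_lt_card ⟨inter_subset_left, fun h => hvC (mem_inter.mp (h hvS)).2⟩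
  have hcard : #(S ∩ C) = 2 * s * (maxDeg A + 1) := by
    have : #(S ∩ C) = min #S _ :=
      hC.2 _ _ ⟨v, rfl⟩ (mt deg_eq_zero_iff_notMem_endpoints.mp (not_not.mpr hv))
    omega
  have hlt : #((blocked A A').erase v) < #(S ∩ C) := calc
    #((blocked A A').erase v) < #(blocked A A') :=
      card_erase_lt_of_mem (mem_union_left _ hv)
    _ ≤ 2 * s * (maxDeg A + 1) := (card_blocked_le A A').trans (by gcongr)
    _ = #(S ∩ C) := hcard.symm
  obtain ⟨w, hwSC, hwb⟩ := exists_mem_notMem_of_card_lt_card hlt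
  obtain ⟨hwS, hwC⟩ := mem_inter.mp hwSC
  obtain ⟨-, hwv, hwτ, -⟩ := mem_filter.mp hwS
  refine ⟨w, hwC, hwv, hwτ, fun h => hwb (mem_erase.mpr ⟨?_, h⟩)⟩
  rintro rfl
  exact hvC hwC

lemma IsSolution.exists_fewer_endpoints_outside {C : Finset V}
    (hC : IsBlockTypeSet A τ (2 * s * (maxDeg A + 1)) C) (hA' : IsSolution A τ Prp s A')
    {v : V} (hv : v ∈ endpoints A') (hvC : v ∉ C) :
    ∃ B, IsSolution A τ Prp s B ∧ #(endpoints B \ C) < #(endpoints A' \ C) := by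
  obtain ⟨w, hwC, hwv, hwτ, hwb⟩ :=
    exists_swap_partner hC (disjoint_right.mpr hA'.1) hA'.2.2.1 hA'.2.2.2.2 hv hvC
  refine ⟨_, hA'.relabel_swap (hC.deg_mem_of_notMem hvC) hwv hwτ hwb, ?_⟩
  have hwe : w ∉ endpoints A' := fun h => hwb (mem_union_left _ h)
  refine (card_le_card fun x hx => ?_).trans_lt (card_erase_lt_of_mem (mem_sdiff.mpr ⟨hv, hvC⟩))
  obtain ⟨hxB, hxC⟩ := mem_sdiff.mp hx
  rw [← deg_eq_zero_iff_notMem_endpoints.not_left, deg_relabel, Equiv.symm_swap,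
    deg_eq_zero_iff_notMem_endpoints, not_not] at hxB
  have hxw : x ≠ w := fun h => hxC (h ▸ hwC)
  have hxv : x ≠ v := by rintro rfl; exact hwe (by simpa using hxB)
  rw [Equiv.swap_apply_of_ne_of_ne hxv hxw] at hxB
  exact mem_erase.mpr ⟨hxv, mem_sdiff.mpr ⟨hxB, hxC⟩⟩

lemma IsSolution.exists_endpoints_subset {C : Finset V}
    (hC : IsBlockTypeSet A τ (2 * s * (maxDeg A + 1)) C) (hA' : IsSolution A τ Prp s A') :
    ∃ B, IsSolution A τ Prp s B ∧ endpoints B ⊆ C := by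
  induction hn : #(endpoints A' \ C) using Nat.strong_induction_on generalizing A' with
  | _ n ih =>
    by_cases hsub : endpoints A' ⊆ C
    · exact ⟨A', hA', hsub⟩
    obtain ⟨v, hv, hvC⟩ := not_subset.mp hsub
    obtain ⟨B, hB, hlt⟩ := hA'.exists_fewer_endpoints_outside hC hv hvC
    exact ih _ (hn ▸ hlt) hB rfl

end Solutions

theorem solution_in_block_type_set_general {V : Type*} [Fintype V] [DecidableEq V]
    (A : Finset (V × V))
    (s : ℕ) (τ : V → Finset (ℕ × ℕ)) (Prp : Multiset (ℕ × ℕ) → Prop)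
    (C : Finset V)
    (hC : IsBlockTypeSet A τ (2 * s * (maxDeg A + 1)) C)
    (hex : ∃ A' : Finset (V × V),
      (∀ a ∈ A', a ∉ A) ∧ (∀ v : V, (v, v) ∉ A') ∧ A'.card ≤ s ∧
      Prp (degSeq (A ∪ A')) ∧ (∀ v : V, deg (A ∪ A') v ∈ τ v)) :
    ∃ A'' : Finset (V × V),
      A'' ⊆ C ×ˢ C ∧
      (∀ a ∈ A'', a ∉ A) ∧ (∀ v : V, (v, v) ∉ A'') ∧ A''.card ≤ s ∧
      Prp (degSeq (A ∪ A'')) ∧ (∀ v : V, deg (A ∪ A'') v ∈ τ v) := by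
  obtain ⟨A', hA'⟩ := hex
  obtain ⟨B, hB, hBC⟩ := IsSolution.exists_endpoints_subset (Prp := Prp) hC hA'
  exact ⟨B, subset_product_of_endpoints_subset hBC, hB⟩

/-- **Solutions inside a `2s(Δ_D+1)`-block-type set.** If a `DDConSeqC` instance
has a solution, then it has one all of whose arcs lie inside
a given `2s(Δ_D+1)`-block-type set `C`. -/
theorem solution_in_block_type_set {V : Type*} [Fintype V] [DecidableEq V]
    (A : Finset (V × V)) (hA : ∀ v : V, (v, v) ∉ A)
    (s : ℕ) (τ : V → Finset (ℕ × ℕ)) (Prp : Multiset (ℕ × ℕ) → Prop)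
    (C : Finset V)
    (hC : IsBlockTypeSet A τ (2 * s * (maxDeg A + 1)) C)
    (hex : ∃ A' : Finset (V × V),
      (∀ a ∈ A', a ∉ A) ∧ (∀ v : V, (v, v) ∉ A') ∧ A'.card ≤ s ∧
      Prp (degSeq (A ∪ A')) ∧ (∀ v : V, deg (A ∪ A') v ∈ τ v)) :
    ∃ A'' : Finset (V × V),
      A'' ⊆ C ×ˢ C ∧
      (∀ a ∈ A'', a ∉ A) ∧ (∀ v : V, (v, v) ∉ A'') ∧ A''.card ≤ s ∧
      Prp (degSeq (A ∪ A'')) ∧ (∀ v : V, deg (A ∪ A'') v ∈ τ v) :=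
  solution_in_block_type_set_general A s τ Prp C hC hex
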